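/- arXiv:1305.7213 — 5 statements merged into one kernel-verified Lean document; each statement's English description precedes it below -/
import Mathlib

section
/- Let A = ⋃_{k=0}^∞ ((2^{2k}, 2^{2k+1}] ∩ ℕ) and α > -1. Then the lower α-density of A equals 1/(2^{α+1}+1) and the upper α-density of A equals 2^{α+1}/(2^{α+1}+1). -/
/-!
On a block `(4^j, 2·4^j]` of `A` the quotient `A_α(n)/ℕ_α(n)` increases with `n` (numerator and
denominator grow by the same amount) and on a gap `(2·4^j, 4^(j+1)]` it decreases, so its lower
and upper limits are its limits along `n = 4^j` and `n = 2·4^j`. Comparing with `∫ x^α` gives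
`ℕ_α(n) ~ n^(α+1)/(α+1)`; with `x = 2^(α+1)` this makes `ℕ_α(4^j) ~ x^(2j)/(α+1)` and
`ℕ_α(2·4^j) ~ x^(2j+1)/(α+1)`, and summing the blocks,
`A_α(4^j) = ∑_{i<j} (ℕ_α(2·4^i) - ℕ_α(4^i)) ~ x^(2j)/((α+1)(x+1))`.
The two quotients therefore tend to `1/(x+1)` and `x/(x+1)`.
-/

open Filter Finset Topology

lemma tendsto_sum_range_div_pow {r c : ℝ} (hr : 1 < r) {a : ℕ → ℝ}
    (ha : Tendsto (fun i => a i / r ^ i) atTop (𝓝 c)) :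
    Tendsto (fun n => (∑ i ∈ range n, a i) / r ^ n) atTop (𝓝 (c / (r - 1))) := by
  have hpos : ∀ i, 0 < r ^ i := fun i => pow_pos (zero_lt_one.trans hr) i
  have hr1 : 0 < r - 1 := sub_pos.2 hr
  have hgeom : ∀ n, ∑ i ∈ range n, r ^ i = (r ^ n - 1) / (r - 1) := geom_sum_eq hr.ne'
  have herr : (fun i => a i - c * r ^ i) =o[atTop] (r ^ ·) := by
    rw [Asymptotics.isLittleO_iff_tendsto' (.of_forall fun i h => absurd h (hpos i).ne')]
    refine (sub_self c ▸ ha.sub_const c).congr fun i => ?_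
    field_simp [(hpos i).ne']
  have hgeomO : (fun n => ∑ i ∈ range n, r ^ i) =O[atTop] (r ^ ·) := by
    refine Asymptotics.IsBigO.of_bound (r - 1)⁻¹ (.of_forall fun n => ?_)
    rw [Real.norm_of_nonneg (sum_nonneg fun i _ => (hpos i).le), Real.norm_of_nonneg (hpos n).le,
      hgeom, div_eq_inv_mul]
    gcongr
    linarith
  have htop : Tendsto (fun n => ∑ i ∈ range n, r ^ i) atTop atTop :=
    tendsto_atTop_mono (fun n => by
      simpa using card_nsmul_le_sum (range n) (r ^ ·) 1 fun i _ => one_le_pow₀ hr.le)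
      tendsto_natCast_atTop_atTop
  have hsum :=
    ((herr.sum_range (fun i => (hpos i).le) htop).trans_isBigO hgeomO).tendsto_div_nhds_zero
  have hmain : Tendsto (fun n => c / (r - 1) * (1 - (r ^ n)⁻¹)) atTop (𝓝 (c / (r - 1))) := by
    simpa using ((tendsto_inv_atTop_zero.comp (tendsto_pow_atTop_atTop_of_one_lt hr)).const_sub
      1).const_mul (c / (r - 1))
  refine (zero_add (c / (r - 1)) ▸ hsum.add hmain).congr fun n => ?_
  rw [sum_sub_distrib, ← mul_sum, hgeom]
  field_simp [(hpos n).ne', hr1.ne']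
  ring

lemma Nat.tendsto_log_atTop {b : ℕ} (hb : 1 < b) : Tendsto (Nat.log b) atTop atTop :=
  tendsto_atTop_atTop.2 fun k => ⟨b ^ k, fun _ hn => Nat.le_log_of_pow_le hb hn⟩

section Extremal

variable {u : ℕ → ℝ} {τ ι : ℕ → ℕ} {L : ℝ}

lemma liminf_eq_of_tendsto_comp_of_le (hu : IsBoundedUnder (· ≤ ·) atTop u)
    (hτ : Tendsto τ atTop atTop) (hι : Tendsto ι atTop atTop)
    (hL : Tendsto (u ∘ τ) atTop (𝓝 L)) (hle : ∀ᶠ n in atTop, u (τ (ι n)) ≤ u n) :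
    liminf u atTop = L := by
  have hLι := hL.comp hι
  apply le_antisymm
  · calc liminf u atTop ≤ liminf u (map τ atTop) :=
          liminf_le_liminf_of_le hτ (hLι.isBoundedUnder_ge.mono_ge hle)
            (hu.mono hτ).isCoboundedUnder_ge
      _ = L := by rw [← liminf_comp, hL.liminf_eq]
  · calc L = liminf (u ∘ τ ∘ ι) atTop := hLι.liminf_eq.symm
      _ ≤ liminf u atTop := liminf_le_liminf hle hLι.isBoundedUnder_ge hu.isCoboundedUnder_ge

lemma limsup_eq_of_tendsto_comp_of_le (hu : IsBoundedUnder (· ≥ ·) atTop u)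
    (hτ : Tendsto τ atTop atTop) (hι : Tendsto ι atTop atTop)
    (hL : Tendsto (u ∘ τ) atTop (𝓝 L)) (hle : ∀ᶠ n in atTop, u n ≤ u (τ (ι n))) :
    limsup u atTop = L := by
  have hLι := hL.comp hι
  apply le_antisymm
  · calc limsup u atTop ≤ limsup (u ∘ τ ∘ ι) atTop :=
          limsup_le_limsup hle hu.isCoboundedUnder_le hLι.isBoundedUnder_le
      _ = L := hLι.limsup_eq
  · calc L = limsup u (map τ atTop) := by rw [← limsup_comp, hL.limsup_eq]
      _ ≤ limsup u atTop := limsup_le_limsup_of_le hτ (hu.mono hτ).isCoboundedUnder_le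
            (hLι.isBoundedUnder_le.mono_le hle)

end Extremal

noncomputable section

def weightSum (w : ℕ → ℝ) (n : ℕ) : ℝ := ∑ k ∈ Icc 1 n, w k

/-- With `w k = k ^ α` this is the quotient `S_α(n) / ℕ_α(n)` of the α-densities. -/
def densityRatio (S : Set ℕ) (w : ℕ → ℝ) (n : ℕ) : ℝ :=
  weightSum (S.indicator w) n / weightSum w n

end

section WeightedDensity

variable {S : Set ℕ} {w : ℕ → ℝ} {m n : ℕ}

lemma weightSum_add_sum_Ioc (w : ℕ → ℝ) (h : m ≤ n) :
    weightSum w m + ∑ k ∈ Ioc m n, w k = weightSum w n := by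
  have hIcc : ∀ n, Icc 1 n = Ioc 0 n := fun n => by
    ext; simp [Nat.one_le_iff_ne_zero, Nat.pos_iff_ne_zero]
  simp only [weightSum, hIcc]
  exact sum_Ioc_consecutive w (Nat.zero_le m) h

lemma weightSum_nonneg (hw : 0 ≤ w) (n : ℕ) : 0 ≤ weightSum w n :=
  sum_nonneg fun k _ => hw k

lemma weightSum_mono (hw : 0 ≤ w) : Monotone (weightSum w) := fun m n h => by
  rw [← weightSum_add_sum_Ioc w h]
  exact le_add_of_nonneg_right (sum_nonneg fun k _ => hw k)

lemma weightSum_pos (hw : 0 ≤ w) (hw1 : 0 < w 1) (hn : 1 ≤ n) : 0 < weightSum w n :=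
  hw1.trans_le (by simpa [weightSum] using weightSum_mono hw hn)

lemma weightSum_indicator_le (hw : 0 ≤ w) (n : ℕ) :
    weightSum (S.indicator w) n ≤ weightSum w n :=
  sum_le_sum fun k _ => Set.indicator_le_self' (fun k _ => hw k) k

lemma weightSum_indicator_of_forall_notMem (h : m ≤ n) (hS : ∀ k ∈ Ioc m n, k ∉ S) :
    weightSum (S.indicator w) n = weightSum (S.indicator w) m := by
  rw [← weightSum_add_sum_Ioc _ h, sum_eq_zero fun k hk => Set.indicator_of_notMem (hS k hk) w,
    add_zero]

lemma weightSum_indicator_of_forall_mem (h : m ≤ n) (hS : ∀ k ∈ Ioc m n, k ∈ S) :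
    weightSum (S.indicator w) n =
      weightSum (S.indicator w) m + (weightSum w n - weightSum w m) := by
  rw [← weightSum_add_sum_Ioc _ h, ← weightSum_add_sum_Ioc w h, add_sub_cancel_left,
    sum_congr rfl fun k hk => Set.indicator_of_mem (hS k hk) w]

lemma densityRatio_nonneg (hw : 0 ≤ w) (n : ℕ) : 0 ≤ densityRatio S w n :=
  div_nonneg (weightSum_nonneg (Set.indicator_nonneg fun k _ => hw k) n) (weightSum_nonneg hw n)

lemma densityRatio_le_one (hw : 0 ≤ w) (n : ℕ) : densityRatio S w n ≤ 1 :=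
  div_le_one_of_le₀ (weightSum_indicator_le hw n) (weightSum_nonneg hw n)

lemma densityRatio_anti_of_forall_notMem (hw : 0 ≤ w) (hw1 : 0 < w 1) (hm : 1 ≤ m) (h : m ≤ n)
    (hS : ∀ k ∈ Ioc m n, k ∉ S) : densityRatio S w n ≤ densityRatio S w m := by
  rw [densityRatio, densityRatio, weightSum_indicator_of_forall_notMem h hS]
  exact div_le_div_of_nonneg_left (weightSum_nonneg (Set.indicator_nonneg fun k _ => hw k) m)
    (weightSum_pos hw hw1 hm) (weightSum_mono hw h)

lemma densityRatio_mono_of_forall_mem (hw : 0 ≤ w) (hw1 : 0 < w 1) (hm : 1 ≤ m) (h : m ≤ n)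
    (hS : ∀ k ∈ Ioc m n, k ∈ S) : densityRatio S w m ≤ densityRatio S w n := by
  rw [densityRatio, densityRatio, weightSum_indicator_of_forall_mem h hS]
  have hpos := weightSum_pos hw hw1 hm
  have hle : weightSum (S.indicator w) m ≤ weightSum w m := weightSum_indicator_le hw m
  have hmono := weightSum_mono hw h
  rw [div_le_div_iff₀ hpos (hpos.trans_le hmono)]
  nlinarith

end WeightedDensity

def blockSet : Set ℕ := {m | ∃ k : ℕ, 2 ^ (2 * k) < m ∧ m ≤ 2 ^ (2 * k + 1)}

section BlockSet

variable {w : ℕ → ℝ} {j n : ℕ}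

lemma mem_blockSet_iff : n ∈ blockSet ↔ ∃ j, 4 ^ j < n ∧ n ≤ 2 * 4 ^ j := by
  simp only [blockSet, Set.mem_ofPred_eq, pow_succ, pow_mul]
  norm_num [mul_comm]

lemma mem_blockSet (h1 : 4 ^ j < n) (h2 : n ≤ 2 * 4 ^ j) : n ∈ blockSet :=
  mem_blockSet_iff.2 ⟨j, h1, h2⟩

lemma notMem_blockSet (h1 : 4 ^ j < 2 * n) (h2 : n ≤ 4 ^ j) : n ∉ blockSet := by
  rintro hn
  obtain ⟨i, hi1, hi2⟩ := mem_blockSet_iff.1 hn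
  have hij : i < j := (Nat.pow_lt_pow_iff_right (by norm_num)).1 (hi1.trans_le h2)
  have := Nat.pow_le_pow_right (show 0 < 4 by norm_num) hij
  rw [pow_succ] at this
  omega

lemma densityRatio_blockSet_four_pow_le (hw : 0 ≤ w) (hw1 : 0 < w 1) (h1 : 4 ^ j < 2 * n)
    (h2 : n ≤ 2 * 4 ^ j) : densityRatio blockSet w (4 ^ j) ≤ densityRatio blockSet w n := by
  rcases le_or_gt n (4 ^ j) with hgap | hblock
  · exact densityRatio_anti_of_forall_notMem hw hw1 (by omega) hgap fun k hk =>
      notMem_blockSet (by simp at hk; omega) (mem_Ioc.1 hk).2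
  · exact densityRatio_mono_of_forall_mem hw hw1 (Nat.one_le_pow _ _ (by norm_num)) hblock.le
      fun k hk => mem_blockSet (mem_Ioc.1 hk).1 ((mem_Ioc.1 hk).2.trans h2)

lemma densityRatio_blockSet_le_two_mul_four_pow (hw : 0 ≤ w) (hw1 : 0 < w 1) (h1 : 4 ^ j < n)
    (h2 : n ≤ 4 ^ (j + 1)) :
    densityRatio blockSet w n ≤ densityRatio blockSet w (2 * 4 ^ j) := by
  rcases le_or_gt n (2 * 4 ^ j) with hblock | hgap
  · exact densityRatio_mono_of_forall_mem hw hw1 (by omega) hblock fun k hk =>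
      mem_blockSet (by simp at hk; omega) (mem_Ioc.1 hk).2
  · exact densityRatio_anti_of_forall_notMem hw hw1 (by omega) hgap.le fun k hk =>
      notMem_blockSet (j := j + 1) (by simp [pow_succ] at hk ⊢; omega) ((mem_Ioc.1 hk).2.trans h2)

lemma weightSum_indicator_blockSet_two_mul_four_pow (w : ℕ → ℝ) (j : ℕ) :
    weightSum (blockSet.indicator w) (2 * 4 ^ j) =
      weightSum (blockSet.indicator w) (4 ^ j) + (weightSum w (2 * 4 ^ j) - weightSum w (4 ^ j)) :=
  weightSum_indicator_of_forall_mem (by omega) fun _ hk =>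
    mem_blockSet (mem_Ioc.1 hk).1 (mem_Ioc.1 hk).2

lemma weightSum_indicator_blockSet_four_pow_succ (w : ℕ → ℝ) (j : ℕ) :
    weightSum (blockSet.indicator w) (4 ^ (j + 1)) = weightSum (blockSet.indicator w) (2 * 4 ^ j) :=
  weightSum_indicator_of_forall_notMem (by omega) fun k hk =>
    notMem_blockSet (j := j + 1) (by simp [pow_succ] at hk ⊢; omega) (mem_Ioc.1 hk).2

lemma weightSum_indicator_blockSet_four_pow (w : ℕ → ℝ) (j : ℕ) :
    weightSum (blockSet.indicator w) (4 ^ j) =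
      ∑ i ∈ range j, (weightSum w (2 * 4 ^ i) - weightSum w (4 ^ i)) := by
  induction j with
  | zero => simp [weightSum, mem_blockSet_iff]
  | succ j ih =>
    rw [weightSum_indicator_blockSet_four_pow_succ, weightSum_indicator_blockSet_two_mul_four_pow,
      ih, sum_range_succ]

end BlockSet

section PowerSums

variable {α : ℝ}

lemma weightSum_eq_sum_Ico (w : ℕ → ℝ) (n : ℕ) :
    weightSum w n = ∑ k ∈ Ico 1 (n + 1), w k :=
  rfl

lemma weightSum_eq_sum_Ico_succ (w : ℕ → ℝ) (n : ℕ) :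
    weightSum w n = ∑ i ∈ Ico 0 n, w (i + 1) := by
  rw [weightSum_eq_sum_Ico, sum_Ico_add', zero_add]

lemma weightSum_rpow_bounds (hα : -1 < α) {n : ℕ} (hn : 1 ≤ n) :
    ((n : ℝ) ^ (α + 1) - 1) / (α + 1) ≤ weightSum (fun k => (k : ℝ) ^ α) n ∧
      weightSum (fun k => (k : ℝ) ^ α) n ≤
        (((n : ℝ) + 1) ^ (α + 1) - 1) / (α + 1) + 1 := by
  have hs : 0 < α + 1 := by linarith
  have hint : ∀ a b : ℕ,
      ∫ x in (a : ℝ)..b, x ^ α = ((b : ℝ) ^ (α + 1) - (a : ℝ) ^ (α + 1)) / (α + 1) :=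
    fun a b => integral_rpow (Or.inl hα)
  have hgrow :
      ((n : ℝ) ^ (α + 1) - 1) / (α + 1) ≤ (((n : ℝ) + 1) ^ (α + 1) - 1) / (α + 1) := by
    gcongr; linarith
  rcases le_or_gt 0 α with hα0 | hα0
  · have hmono : ∀ a b : ℕ, MonotoneOn (fun x : ℝ => x ^ α) (Set.Icc a b) :=
      fun a b x hx y _ hxy => Real.rpow_le_rpow (le_trans (Nat.cast_nonneg a) hx.1) hxy hα0
    have hlow := (hmono 0 n).integral_le_sum_Ico (Nat.zero_le n)
    have hup := (hmono 1 (n + 1)).sum_le_integral_Ico (by omega)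
    rw [hint, ← weightSum_eq_sum_Ico_succ (fun k : ℕ => (k : ℝ) ^ α)] at hlow
    rw [hint, ← weightSum_eq_sum_Ico (fun k : ℕ => (k : ℝ) ^ α)] at hup
    push_cast at hlow hup
    rw [Real.zero_rpow hs.ne', sub_zero] at hlow
    rw [Real.one_rpow] at hup
    have hdrop := div_le_div_of_nonneg_right (sub_le_self ((n : ℝ) ^ (α + 1)) zero_le_one) hs.le
    constructor <;> linarith
  · have hanti : ∀ a b : ℕ, 1 ≤ a → AntitoneOn (fun x : ℝ => x ^ α) (Set.Icc a b) :=
      fun a b ha x hx y _ hxy => Real.rpow_le_rpow_of_nonpos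
        (lt_of_lt_of_le (by exact_mod_cast ha) hx.1) hxy hα0.le
    have hlow := (hanti 1 (n + 1) le_rfl).integral_le_sum_Ico (by omega)
    have hup := (hanti 1 n le_rfl).sum_le_integral_Ico hn
    rw [hint, ← weightSum_eq_sum_Ico (fun k : ℕ => (k : ℝ) ^ α)] at hlow
    rw [hint] at hup
    push_cast at hlow hup
    rw [Real.one_rpow] at hlow hup
    refine ⟨hgrow.trans hlow, ?_⟩
    rw [weightSum_eq_sum_Ico_succ, sum_eq_sum_Ico_succ_bot (by omega)]
    push_cast
    rw [Real.one_rpow]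
    linarith

lemma tendsto_weightSum_rpow_div_rpow (hα : -1 < α) :
    Tendsto (fun n : ℕ => weightSum (fun k => (k : ℝ) ^ α) n / (n : ℝ) ^ (α + 1)) atTop
      (𝓝 (α + 1)⁻¹) := by
  set s := α + 1
  have hs : 0 < s := by linarith
  have hinv : Tendsto (fun n : ℕ => ((n : ℝ) ^ s)⁻¹) atTop (𝓝 0) :=
    ((tendsto_rpow_atTop hs).comp tendsto_natCast_atTop_atTop).inv_tendsto_atTop
  have hratio : Tendsto (fun n : ℕ => ((n : ℝ) + 1) ^ s / (n : ℝ) ^ s) atTop (𝓝 1) := by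
    have hbase : Tendsto (fun n : ℕ => 1 + (n : ℝ)⁻¹) atTop (𝓝 1) := by
      simpa using (tendsto_inv_atTop_zero.comp tendsto_natCast_atTop_atTop).const_add (1 : ℝ)
    have hpow := ((Real.continuousAt_rpow_const 1 s (Or.inl one_ne_zero)).tendsto.comp hbase)
    rw [Real.one_rpow] at hpow
    refine hpow.congr' ?_
    filter_upwards [eventually_ge_atTop 1] with n hn
    have hn0 : (0 : ℝ) < n := by exact_mod_cast hn
    rw [Function.comp_apply, ← Real.div_rpow (by positivity) hn0.le]
    congr 1
    field_simp
  have hpos : ∀ᶠ n : ℕ in atTop, 0 < (n : ℝ) ^ s := by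
    filter_upwards [eventually_ge_atTop 1] with n hn
    exact Real.rpow_pos_of_pos (by exact_mod_cast hn) s
  refine tendsto_of_tendsto_of_tendsto_of_le_of_le'
    (g := fun n : ℕ => (1 - ((n : ℝ) ^ s)⁻¹) / s)
    (h := fun n : ℕ =>
      (((n : ℝ) + 1) ^ s / (n : ℝ) ^ s - ((n : ℝ) ^ s)⁻¹) / s + ((n : ℝ) ^ s)⁻¹)
    ?_ ?_ ?_ ?_
  · simpa using (hinv.const_sub 1).div_const s
  · simpa using ((hratio.sub hinv).div_const s).add hinv
  · filter_upwards [eventually_ge_atTop 1, hpos] with n hn hnpos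
    calc (1 - ((n : ℝ) ^ s)⁻¹) / s = (((n : ℝ) ^ s - 1) / s) / (n : ℝ) ^ s := by field_simp
      _ ≤ _ := div_le_div_of_nonneg_right (weightSum_rpow_bounds hα hn).1 hnpos.le
  · filter_upwards [eventually_ge_atTop 1, hpos] with n hn hnpos
    calc _ ≤ ((((n : ℝ) + 1) ^ s - 1) / s + 1) / (n : ℝ) ^ s :=
          div_le_div_of_nonneg_right (weightSum_rpow_bounds hα hn).2 hnpos.le
      _ = _ := by field_simp

end PowerSums

section Corners

variable {α : ℝ}

lemma natCast_four_pow_rpow (s : ℝ) (j : ℕ) :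
    ((4 ^ j : ℕ) : ℝ) ^ s = (((2 : ℝ) ^ s) ^ 2) ^ j := by
  rw [Real.rpow_pow_comm (by norm_num), Real.rpow_pow_comm (by positivity)]
  norm_num [← pow_mul]

lemma natCast_two_mul_four_pow_rpow (s : ℝ) (j : ℕ) :
    ((2 * 4 ^ j : ℕ) : ℝ) ^ s = (2 : ℝ) ^ s * (((2 : ℝ) ^ s) ^ 2) ^ j := by
  rw [Real.rpow_pow_comm (by norm_num), Real.rpow_pow_comm (by positivity),
    ← Real.mul_rpow (by norm_num) (by positivity)]
  norm_num [← pow_mul]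

lemma tendsto_weightSum_rpow_four_pow_div (hα : -1 < α) :
    Tendsto (fun j =>
      weightSum (fun k => (k : ℝ) ^ α) (4 ^ j) / (((2 : ℝ) ^ (α + 1)) ^ 2) ^ j)
      atTop (𝓝 (α + 1)⁻¹) :=
  ((tendsto_weightSum_rpow_div_rpow hα).comp
    (tendsto_pow_atTop_atTop_of_one_lt (by norm_num : 1 < 4))).congr fun j => by
      rw [Function.comp_apply, natCast_four_pow_rpow]

lemma tendsto_weightSum_rpow_two_mul_four_pow_div (hα : -1 < α) :
    Tendsto (fun j =>
      weightSum (fun k => (k : ℝ) ^ α) (2 * 4 ^ j) / (((2 : ℝ) ^ (α + 1)) ^ 2) ^ j)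
      atTop (𝓝 ((α + 1)⁻¹ * (2 : ℝ) ^ (α + 1))) := by
  have hτ : Tendsto (fun j : ℕ => 2 * 4 ^ j) atTop atTop :=
    (tendsto_pow_atTop_atTop_of_one_lt (by norm_num)).const_mul_atTop' (by norm_num)
  refine (((tendsto_weightSum_rpow_div_rpow hα).comp hτ).mul_const ((2 : ℝ) ^ (α + 1))).congr
    fun j => ?_
  rw [Function.comp_apply, natCast_two_mul_four_pow_rpow]
  field_simp

lemma tendsto_weightSum_indicator_blockSet_div (hα : -1 < α) :
    Tendsto (fun j => weightSum (blockSet.indicator fun k => (k : ℝ) ^ α) (4 ^ j) /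
      (((2 : ℝ) ^ (α + 1)) ^ 2) ^ j) atTop
      (𝓝 ((α + 1)⁻¹ / ((2 : ℝ) ^ (α + 1) + 1))) := by
  set x := (2 : ℝ) ^ (α + 1)
  have hx : 1 < x := Real.one_lt_rpow (by norm_num) (by linarith)
  have hdiff : Tendsto (fun i => (weightSum (fun k => (k : ℝ) ^ α) (2 * 4 ^ i) -
      weightSum (fun k => (k : ℝ) ^ α) (4 ^ i)) / (x ^ 2) ^ i) atTop
      (𝓝 ((α + 1)⁻¹ * x - (α + 1)⁻¹)) := by
    simpa only [sub_div] using (tendsto_weightSum_rpow_two_mul_four_pow_div hα).sub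
      (tendsto_weightSum_rpow_four_pow_div hα)
  simp_rw [weightSum_indicator_blockSet_four_pow]
  convert tendsto_sum_range_div_pow (one_lt_pow₀ hx two_ne_zero) hdiff using 2
  rw [show x ^ 2 - 1 = (x + 1) * (x - 1) by ring, ← mul_sub_one,
    mul_div_mul_right _ _ (by linarith)]

lemma tendsto_densityRatio_blockSet_four_pow (hα : -1 < α) :
    Tendsto (fun j => densityRatio blockSet (fun k => (k : ℝ) ^ α) (4 ^ j)) atTop
      (𝓝 (1 / ((2 : ℝ) ^ (α + 1) + 1))) := by
  have hs : α + 1 ≠ 0 := by linarith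
  convert (tendsto_weightSum_indicator_blockSet_div hα).div
    (tendsto_weightSum_rpow_four_pow_div hα) (inv_ne_zero hs) using 1
  · ext j
    exact (div_div_div_cancel_right₀ (pow_ne_zero _ (by positivity)) _ _).symm
  · congr 1
    field_simp

lemma tendsto_densityRatio_blockSet_two_mul_four_pow (hα : -1 < α) :
    Tendsto (fun j => densityRatio blockSet (fun k => (k : ℝ) ^ α) (2 * 4 ^ j)) atTop
      (𝓝 ((2 : ℝ) ^ (α + 1) / ((2 : ℝ) ^ (α + 1) + 1))) := by
  have hs : (α + 1)⁻¹ * (2 : ℝ) ^ (α + 1) ≠ 0 :=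
    mul_ne_zero (inv_ne_zero (by linarith)) (by positivity)
  have hnum := (tendsto_weightSum_indicator_blockSet_div hα).add
    ((tendsto_weightSum_rpow_two_mul_four_pow_div hα).sub
      (tendsto_weightSum_rpow_four_pow_div hα))
  convert hnum.div (tendsto_weightSum_rpow_two_mul_four_pow_div hα) hs using 1
  · ext j
    rw [Pi.div_apply, densityRatio, weightSum_indicator_blockSet_two_mul_four_pow, ← sub_div,
      ← add_div, div_div_div_cancel_right₀ (pow_ne_zero _ (by positivity))]
  · congr 1
    have : (2 : ℝ) ^ (α + 1) + 1 ≠ 0 := by positivity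
    have : α + 1 ≠ 0 := by linarith
    field_simp
    ring

end Corners

section BlockSetExtremal

variable {w : ℕ → ℝ} {L : ℝ}

lemma liminf_densityRatio_blockSet (hw : 0 ≤ w) (hw1 : 0 < w 1)
    (hL : Tendsto (fun j => densityRatio blockSet w (4 ^ j)) atTop (𝓝 L)) :
    liminf (densityRatio blockSet w) atTop = L := by
  refine liminf_eq_of_tendsto_comp_of_le (τ := (4 ^ ·)) (ι := fun n => Nat.log 4 (2 * n - 1))
    (isBoundedUnder_of ⟨1, densityRatio_le_one hw⟩)
    (tendsto_pow_atTop_atTop_of_one_lt (by norm_num : 1 < 4))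
    ((Nat.tendsto_log_atTop (by norm_num)).comp
      (tendsto_atTop_mono (fun n => show n ≤ 2 * n - 1 by omega) tendsto_id))
    hL ?_
  -- `Nat.log 4 (2 * n - 1)` is the `j` with `4 ^ j < 2 * n ≤ 4 ^ (j + 1)`.
  filter_upwards [eventually_ge_atTop 1] with n hn
  have h1 := Nat.pow_log_le_self 4 (x := 2 * n - 1) (by omega)
  have h2 := Nat.lt_pow_succ_log_self (by norm_num : 1 < 4) (2 * n - 1)
  rw [pow_succ] at h2
  exact densityRatio_blockSet_four_pow_le hw hw1 (by omega) (by omega)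

lemma limsup_densityRatio_blockSet (hw : 0 ≤ w) (hw1 : 0 < w 1)
    (hL : Tendsto (fun j => densityRatio blockSet w (2 * 4 ^ j)) atTop (𝓝 L)) :
    limsup (densityRatio blockSet w) atTop = L := by
  refine limsup_eq_of_tendsto_comp_of_le (τ := (2 * 4 ^ ·)) (ι := fun n => Nat.log 4 (n - 1))
    (isBoundedUnder_of ⟨0, densityRatio_nonneg hw⟩)
    ((tendsto_pow_atTop_atTop_of_one_lt (by norm_num : 1 < 4)).const_mul_atTop' (by norm_num))
    ((Nat.tendsto_log_atTop (by norm_num)).comp (tendsto_sub_atTop_nat 1)) hL ?_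
  -- `Nat.log 4 (n - 1)` is the `j` with `4 ^ j < n ≤ 4 ^ (j + 1)`.
  filter_upwards [eventually_ge_atTop 2] with n hn
  have h1 := Nat.pow_log_le_self 4 (x := n - 1) (by omega)
  have h2 := Nat.lt_pow_succ_log_self (by norm_num : 1 < 4) (n - 1)
  exact densityRatio_blockSet_le_two_mul_four_pow hw hw1 (by omega) (by omega)

end BlockSetExtremal

theorem stmt_7 (α : ℝ) (hα : -1 < α) :
    let A : Set ℕ := {m | ∃ k : ℕ, 2 ^ (2 * k) < m ∧ m ≤ 2 ^ (2 * k + 1)}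
    Filter.liminf
        (fun n : ℕ =>
          (∑ k ∈ Finset.Icc 1 n, A.indicator (fun k => (k : ℝ) ^ α) k) /
            ∑ k ∈ Finset.Icc 1 n, (k : ℝ) ^ α)
        Filter.atTop = 1 / ((2 : ℝ) ^ (α + 1) + 1) ∧
    Filter.limsup
        (fun n : ℕ =>
          (∑ k ∈ Finset.Icc 1 n, A.indicator (fun k => (k : ℝ) ^ α) k) /
            ∑ k ∈ Finset.Icc 1 n, (k : ℝ) ^ α)
        Filter.atTop = (2 : ℝ) ^ (α + 1) / ((2 : ℝ) ^ (α + 1) + 1) := by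
  have hw : 0 ≤ fun k : ℕ => (k : ℝ) ^ α := fun k => Real.rpow_nonneg k.cast_nonneg α
  have hw1 : 0 < (fun k : ℕ => (k : ℝ) ^ α) 1 := by simp
  exact ⟨liminf_densityRatio_blockSet hw hw1 (tendsto_densityRatio_blockSet_four_pow hα),
    limsup_densityRatio_blockSet hw hw1 (tendsto_densityRatio_blockSet_two_mul_four_pow hα)⟩
end

section
/- If A, B ⊆ ℕ both have asymptotic density and d(A) < d(B), then there exists a set D having asymptotic density with A ∩ B ⊆ D ⊆ B and d(D) = d(A). -/
open Filter

/-- `cnt A n` = number of elements of `A` in `[1, n]`, as a real number. -/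
noncomputable def cnt (A : Set ℕ) (n : ℕ) : ℝ :=
  ∑ k ∈ Finset.Icc 1 n, A.indicator (fun _ => (1 : ℝ)) k

/-- `A` has asymptotic density `x`. -/
def HasDens (A : Set ℕ) (x : ℝ) : Prop :=
  Filter.Tendsto (fun n => cnt A n / n) Filter.atTop (nhds x)

open Classical

/-- natural-number count -/
noncomputable def acnt (X : Set ℕ) (n : ℕ) : ℕ :=
  ∑ k ∈ Finset.Icc 1 n, if k ∈ X then 1 else 0

lemma cnt_eq (X : Set ℕ) (n : ℕ) : cnt X n = (acnt X n : ℝ) := by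
  unfold cnt acnt
  push_cast
  refine Finset.sum_congr rfl fun k _ => ?_
  by_cases h : k ∈ X <;> simp [h]

lemma acnt_zero (X : Set ℕ) : acnt X 0 = 0 := by simp [acnt]

lemma acnt_succ (X : Set ℕ) (n : ℕ) :
    acnt X (n+1) = acnt X n + (if n+1 ∈ X then 1 else 0) := by
  unfold acnt
  rw [Finset.sum_Icc_succ_top (by omega : 1 ≤ n+1)]

lemma acnt_le (X : Set ℕ) (n : ℕ) : acnt X n ≤ n := by
  induction n with
  | zero => simp [acnt_zero]
  | succ n ih => rw [acnt_succ]; split <;> omega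

lemma acnt_mono (X : Set ℕ) (n : ℕ) : acnt X n ≤ acnt X (n+1) := by
  rw [acnt_succ]; omega

/-- greedy count -/
noncomputable def SS (A B : Set ℕ) : ℕ → ℕ
  | 0 => 0
  | n+1 => SS A B n +
      (if (n+1) ∈ B ∧ ((n+1) ∈ A ∨ SS A B n + 1 ≤ acnt A (n+1)) then 1 else 0)

lemma SS_succ (A B : Set ℕ) (n : ℕ) :
    SS A B (n+1) = SS A B n +
      (if (n+1) ∈ B ∧ ((n+1) ∈ A ∨ SS A B n + 1 ≤ acnt A (n+1)) then 1 else 0) := rfl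

lemma SS_le (A B : Set ℕ) (n : ℕ) : SS A B n ≤ acnt A n := by
  induction n with
  | zero => simp [SS, acnt_zero]
  | succ n ih =>
    rw [SS_succ]
    by_cases hc : (n+1) ∈ B ∧ ((n+1) ∈ A ∨ SS A B n + 1 ≤ acnt A (n+1))
    · rcases hc.2 with hA | hle
      · rw [if_pos hc, acnt_succ, if_pos hA]; omega
      · rw [if_pos hc]; omega
    · rw [if_neg hc]
      simpa using le_trans ih (acnt_mono A n)

lemma SS_step (A B : Set ℕ) (n : ℕ) (h : SS A B (n+1) < acnt A (n+1)) :
    acnt B (n+1) + SS A B n ≤ acnt B n + SS A B (n+1) := by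
  by_cases hB : (n+1) ∈ B
  · have hD : SS A B (n+1) = SS A B n + 1 := by
      by_cases hc : (n+1) ∈ B ∧ ((n+1) ∈ A ∨ SS A B n + 1 ≤ acnt A (n+1))
      · rw [SS_succ, if_pos hc]
      · exfalso
        rw [SS_succ, if_neg hc] at h
        push_neg at hc
        have h2 := (hc hB).2
        omega
    rw [acnt_succ, if_pos hB, hD]; omega
  · rw [acnt_succ, if_neg hB, SS_succ]
    split <;> omega

lemma SS_interval (A B : Set ℕ) (m : ℕ) :
    ∀ n, m ≤ n → (∀ k, m < k → k ≤ n → SS A B k < acnt A k) →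
      acnt B n + SS A B m ≤ acnt B m + SS A B n := by
  intro n
  induction n with
  | zero =>
    intro hmn _
    have : m = 0 := by omega
    subst this; omega
  | succ n ih =>
    intro hmn h
    rcases Nat.lt_or_ge m (n+1) with hlt | hge
    · have hmn' : m ≤ n := by omega
      have h1 := ih hmn' (fun k hk1 hk2 => h k hk1 (by omega))
      have h2 := SS_step A B n (h (n+1) (by omega) le_rfl)
      omega
    · have : m = n + 1 := by omega
      subst this; omega

/-- The set D -/
def DD (A B : Set ℕ) : Set ℕ :=
  {n | (n = 0 ∧ 0 ∈ A ∧ 0 ∈ B) ∨ (∃ m, n = m + 1 ∧ SS A B (m+1) = SS A B m + 1)}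

lemma SS_cases (A B : Set ℕ) (n : ℕ) :
    SS A B (n+1) = SS A B n ∨ SS A B (n+1) = SS A B n + 1 := by
  rw [SS_succ]; split <;> omega

lemma mem_DD_succ (A B : Set ℕ) (n : ℕ) :
    (n+1) ∈ DD A B ↔ SS A B (n+1) = SS A B n + 1 := by
  constructor
  · rintro (⟨h, -⟩ | ⟨m, hm, hS⟩)
    · omega
    · have : m = n := by omega
      subst this; exact hS
  · intro h; exact Or.inr ⟨n, rfl, h⟩

lemma acnt_DD (A B : Set ℕ) (n : ℕ) : acnt (DD A B) n = SS A B n := by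
  induction n with
  | zero => simp [acnt_zero, SS]
  | succ n ih =>
    rw [acnt_succ, ih]
    by_cases hD : (n+1) ∈ DD A B
    · rw [if_pos hD, (mem_DD_succ A B n).mp hD]
    · rw [if_neg hD]
      rcases SS_cases A B n with h | h
      · omega
      · exact absurd ((mem_DD_succ A B n).mpr h) hD

lemma DD_subset_B (A B : Set ℕ) : DD A B ⊆ B := by
  rintro n (⟨rfl, -, hB⟩ | ⟨m, rfl, hS⟩)
  · exact hB
  · by_cases hc : (m+1) ∈ B ∧ ((m+1) ∈ A ∨ SS A B m + 1 ≤ acnt A (m+1))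
    · exact hc.1
    · rw [SS_succ, if_neg hc] at hS; omega

lemma inter_subset_DD (A B : Set ℕ) : A ∩ B ⊆ DD A B := by
  rintro n ⟨hA, hB⟩
  cases n with
  | zero => exact Or.inl ⟨rfl, hA, hB⟩
  | succ m =>
    refine Or.inr ⟨m, rfl, ?_⟩
    rw [SS_succ, if_pos ⟨hB, Or.inl hA⟩]

lemma dens_bound {X : Set ℕ} {x : ℝ} (hX : HasDens X x) {ε : ℝ} (hε : 0 < ε) :
    ∃ N : ℕ, ∀ n ≥ N, |cnt X n - x * n| ≤ ε * n := by
  obtain ⟨N, hN⟩ := Metric.tendsto_atTop.mp hX ε hε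
  refine ⟨max N 1, fun n hn => ?_⟩
  have h1 : (1:ℕ) ≤ n := le_trans (le_max_right N 1) hn
  have hn0 : (0:ℝ) < n := by exact_mod_cast h1
  have h2 := hN n (le_trans (le_max_left N 1) hn)
  rw [Real.dist_eq] at h2
  have h3 : cnt X n / n - x = (cnt X n - x * n) / n := by field_simp
  rw [h3, abs_div, abs_of_pos hn0, div_lt_iff₀ hn0] at h2
  linarith

theorem stmt_8 (A B : Set ℕ) (a b : ℝ) (hA : HasDens A a) (hB : HasDens B b)
    (hab : a < b) :
    ∃ D : Set ℕ, A ∩ B ⊆ D ∧ D ⊆ B ∧ HasDens D a := by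
  refine ⟨DD A B, inter_subset_DD A B, DD_subset_B A B, ?_⟩
  -- key: the deficit (acnt A n - SS n) is o(n)
  have key : ∀ ε : ℝ, 0 < ε → ∃ N : ℕ, ∀ n ≥ N, (acnt A n : ℝ) - SS A B n ≤ ε * n := by
    intro ε hε
    set ε' : ℝ := min (ε/8) ((b-a)/8) with hε'def
    have hε' : 0 < ε' := lt_min (by linarith) (by linarith)
    have hε'1 : ε' ≤ ε/8 := min_le_left _ _
    have hε'2 : ε' ≤ (b-a)/8 := min_le_right _ _
    obtain ⟨NA, hNA⟩ := dens_bound hA hε'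
    obtain ⟨NB, hNB⟩ := dens_bound hB hε'
    set N₀ := max NA NB with hN₀def
    obtain ⟨N₁, hN₁⟩ := exists_nat_ge ((N₀ : ℝ) / ((b-a)/2))
    refine ⟨max N₀ N₁, fun n hn => ?_⟩
    have hnN₀ : N₀ ≤ n := le_trans (le_max_left _ _) hn
    have hnN₁ : N₁ ≤ n := le_trans (le_max_right _ _) hn
    have hN₀n : (N₀ : ℝ) ≤ (b-a)/2 * n := by
      rw [div_le_iff₀ (by linarith : (0:ℝ) < (b-a)/2)] at hN₁
      have hc : (N₁ : ℝ) ≤ n := by exact_mod_cast hnN₁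
      have := mul_le_mul_of_nonneg_left hc (by linarith : (0:ℝ) ≤ (b-a)/2)
      linarith
    set m := Nat.findGreatest (fun k => SS A B k = acnt A k) n with hmdef
    have hP0 : SS A B 0 = acnt A 0 := by simp [SS, acnt_zero]
    have hPm : SS A B m = acnt A m :=
      Nat.findGreatest_spec (P := fun k => SS A B k = acnt A k) (Nat.zero_le n) hP0
    have hm_le : m ≤ n := Nat.findGreatest_le n
    have hgr : ∀ k, m < k → k ≤ n → SS A B k < acnt A k := by
      intro k h1 h2
      exact lt_of_le_of_ne (SS_le A B k) (Nat.findGreatest_is_greatest (P := fun k => SS A B k = acnt A k) h1 h2)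
    have hint := SS_interval A B m n hm_le hgr
    -- cast to ℝ
    have hintR : (acnt B n : ℝ) + SS A B m ≤ (acnt B m : ℝ) + SS A B n := by
      exact_mod_cast hint
    have hPmR : (SS A B m : ℝ) = acnt A m := by exact_mod_cast hPm
    have hmnR : (m : ℝ) ≤ n := by exact_mod_cast hm_le
    have hAn : |(acnt A n : ℝ) - a * n| ≤ ε' * n := by
      rw [← cnt_eq]; exact hNA n (le_trans (le_max_left _ _) hnN₀)
    have hBn : |(acnt B n : ℝ) - b * n| ≤ ε' * n := by
      rw [← cnt_eq]; exact hNB n (le_trans (le_max_right _ _) hnN₀)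
    rw [abs_le] at hAn hBn
    have hn0 : (0:ℝ) ≤ n := Nat.cast_nonneg n
    by_cases hm : N₀ ≤ m
    · have hAm : |(acnt A m : ℝ) - a * m| ≤ ε' * m := by
        rw [← cnt_eq]; exact hNA m (le_trans (le_max_left _ _) hm)
      have hBm : |(acnt B m : ℝ) - b * m| ≤ ε' * m := by
        rw [← cnt_eq]; exact hNB m (le_trans (le_max_right _ _) hm)
      rw [abs_le] at hAm hBm
      have hm0 : (0:ℝ) ≤ m := Nat.cast_nonneg m
      have hprod : (a - b) * ((n:ℝ) - m) ≤ 0 :=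
        mul_nonpos_of_nonpos_of_nonneg (by linarith) (by linarith)
      have hexp : (a - b) * ((n:ℝ) - m) = a*n - b*n - a*m + b*m := by ring
      have hε'm : ε' * m ≤ ε' * n := mul_le_mul_of_nonneg_left hmnR (le_of_lt hε')
      have hεn : ε' * n ≤ ε/8 * n := mul_le_mul_of_nonneg_right hε'1 hn0
      have heq : ε/8 * (n:ℝ) * 8 = ε * n := by ring
      linarith [hAn.1, hAn.2, hBn.1, hBn.2, hAm.1, hAm.2, hBm.1, hBm.2]
    · -- m < N₀ : the deficit is forced nonpositive
      have hBmle : (acnt B m : ℝ) ≤ m := by exact_mod_cast acnt_le B m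
      have hAm0 : (0:ℝ) ≤ acnt A m := Nat.cast_nonneg _
      have hmN₀ : (m : ℝ) ≤ N₀ := by
        have : m ≤ N₀ := by omega
        exact_mod_cast this
      have hε'n : ε' * n ≤ (b-a)/8 * n := mul_le_mul_of_nonneg_right hε'2 hn0
      have hεn0 : 0 ≤ ε * n := by positivity
      have e1 : (b-a)/8 * (n:ℝ) * 8 = b*n - a*n := by ring
      have e2 : (b-a)/2 * (n:ℝ) * 2 = b*n - a*n := by ring
      linarith [hAn.1, hAn.2, hBn.1, hBn.2]
  -- now conclude HasDens (DD A B) a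
  rw [HasDens]
  rw [Metric.tendsto_atTop]
  intro ε hε
  obtain ⟨N₂, hN₂⟩ := key (ε/4) (by linarith)
  obtain ⟨NA, hNA⟩ := dens_bound hA (show (0:ℝ) < ε/4 by linarith)
  refine ⟨max (max N₂ NA) 1, fun n hn => ?_⟩
  have hn2 : N₂ ≤ n := le_trans (le_trans (le_max_left _ _) (le_max_left _ _)) hn
  have hnA : NA ≤ n := le_trans (le_trans (le_max_right _ _) (le_max_left _ _)) hn
  have hn1 : (1:ℕ) ≤ n := le_trans (le_max_right _ _) hn
  have hn0 : (0:ℝ) < n := by exact_mod_cast hn1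
  have hd := hN₂ n hn2
  have ha := hNA n hnA
  have hSle : (SS A B n : ℝ) ≤ acnt A n := by exact_mod_cast SS_le A B n
  have hcd : cnt (DD A B) n = (SS A B n : ℝ) := by
    rw [cnt_eq, acnt_DD]
  rw [Real.dist_eq, hcd]
  rw [abs_le] at ha
  rw [← cnt_eq] at hd hSle
  have h3 : (SS A B n : ℝ) / n - a = ((SS A B n : ℝ) - a * n) / n := by field_simp
  rw [h3, abs_div, abs_of_pos hn0, div_lt_iff₀ hn0]
  rw [abs_lt]
  have heq4 : ε/4 * (n:ℝ) * 4 = ε * n := by ring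
  have hpos : 0 < ε * n := by positivity
  constructor <;> linarith
end

section
/- If A, B ⊆ ℕ are disjoint and lim_{n→∞} (B(n) - A(n))/n exists and is positive, then there exists D ⊆ B with lim_{n→∞} (D(n) - A(n))/n = 0; in particular B ∖ D has asymptotic density. -/
open Filter

open Classical in
noncomputable def Ncnt (A : Set ℕ) (n : ℕ) : ℕ :=
  ((Finset.Icc 1 n).filter (· ∈ A)).card

lemma cnt_eq_Ncnt (A : Set ℕ) (n : ℕ) : cnt A n = (Ncnt A n : ℝ) := by
  classical
  simp [cnt, Ncnt, Set.indicator_apply, Finset.sum_boole]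

open Classical in
lemma Ncnt_succ (A : Set ℕ) (n : ℕ) :
    Ncnt A (n+1) = Ncnt A n + if (n+1) ∈ A then 1 else 0 := by
  classical
  unfold Ncnt
  rw [← Finset.insert_Icc_right_eq_Icc_add_one (by omega), Finset.filter_insert]
  split
  · rw [Finset.card_insert_of_notMem (by simp)]
  · simp

lemma Ncnt_zero (A : Set ℕ) : Ncnt A 0 = 0 := by
  simp [Ncnt]

/-- The integer count difference. -/
noncomputable def fc (A B : Set ℕ) (n : ℕ) : ℤ := (Ncnt B n : ℤ) - (Ncnt A n : ℤ)

/-- Running max of `fc`. -/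
noncomputable def Mx (A B : Set ℕ) (n : ℕ) : ℤ :=
  (Finset.range (n+1)).sup' Finset.nonempty_range_add_one (fc A B)

/-- Strict record points of `fc` within `B`. -/
def Cset (A B : Set ℕ) : Set ℕ := {b | b ∈ B ∧ ∀ m < b, fc A B m < fc A B b}

lemma fc_zero (A B : Set ℕ) : fc A B 0 = 0 := by simp [fc, Ncnt_zero]

lemma fc_le_Mx (A B : Set ℕ) {m n : ℕ} (h : m ≤ n) : fc A B m ≤ Mx A B n :=
  Finset.le_sup' _ (by simpa using Nat.lt_succ_of_le h)

lemma Mx_mono (A B : Set ℕ) {m n : ℕ} (h : m ≤ n) : Mx A B m ≤ Mx A B n := by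
  apply Finset.sup'_le
  intro b hb
  exact fc_le_Mx A B (by simp at hb; omega)

lemma Mx_succ (A B : Set ℕ) (n : ℕ) :
    Mx A B (n+1) = max (fc A B (n+1)) (Mx A B n) := by
  apply le_antisymm
  · apply Finset.sup'_le
    intro b hb
    simp only [Finset.mem_range, Nat.lt_succ_iff] at hb
    rcases Nat.lt_or_ge b (n+1) with h | h
    · exact le_max_of_le_right (fc_le_Mx A B (by omega))
    · have : b = n+1 := by omega
      subst this
      exact le_max_left _ _
  · exact max_le (fc_le_Mx A B le_rfl) (Mx_mono A B (Nat.le_succ n))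

lemma fc_succ_of_mem (A B : Set ℕ) (hdisj : Disjoint A B) {n : ℕ} (h : (n+1) ∈ B) :
    fc A B (n+1) = fc A B n + 1 := by
  have hA : (n+1) ∉ A := fun hA => Set.disjoint_left.mp hdisj hA h
  simp [fc, Ncnt_succ, h, hA]
  ring

lemma fc_succ_of_notMem (A B : Set ℕ) {n : ℕ} (h : (n+1) ∉ B) :
    fc A B (n+1) ≤ fc A B n := by
  simp only [fc, Ncnt_succ, h, if_false]
  split <;> push_cast <;> omega

/-- Key counting identity: the number of record points up to `n` equals the running max. -/
lemma Ncnt_Cset (A B : Set ℕ) (hdisj : Disjoint A B) (n : ℕ) :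
    (Ncnt (Cset A B) n : ℤ) = Mx A B n := by
  classical
  induction n with
  | zero => simp [Ncnt_zero, Mx, fc_zero]
  | succ n ih =>
    rw [Ncnt_succ, Mx_succ]
    by_cases hC : (n+1) ∈ Cset A B
    · have hB : (n+1) ∈ B := hC.1
      have hrec : ∀ m < n+1, fc A B m < fc A B (n+1) := hC.2
      have h1 : Mx A B n < fc A B (n+1) := by
        obtain ⟨m, hm, hMeq⟩ : ∃ m ∈ Finset.range (n+1), Mx A B n = fc A B m :=
          Finset.exists_mem_eq_sup' (Finset.nonempty_range_add_one) (fc A B)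
        rw [hMeq]
        exact hrec m (by simpa using hm)
      have h2 : fc A B (n+1) = fc A B n + 1 := fc_succ_of_mem A B hdisj hB
      have h3 : fc A B n ≤ Mx A B n := fc_le_Mx A B le_rfl
      have : fc A B (n+1) = Mx A B n + 1 := by omega
      rw [if_pos hC, max_eq_left (by omega), this]
      push_cast
      omega
    · rw [if_neg hC]
      have hle : fc A B (n+1) ≤ Mx A B n := by
        by_cases hB : (n+1) ∈ B
        · have : ¬ ∀ m < n+1, fc A B m < fc A B (n+1) := fun h => hC ⟨hB, h⟩
          push_neg at this
          obtain ⟨m, hm, hfm⟩ := this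
          exact le_trans hfm (fc_le_Mx A B (by omega))
        · exact le_trans (fc_succ_of_notMem A B hB) (fc_le_Mx A B le_rfl)
      rw [max_eq_right hle]
      push_cast
      omega

lemma Cset_subset (A B : Set ℕ) : Cset A B ⊆ B := fun _ h => h.1

lemma Ncnt_partition (A B : Set ℕ) (n : ℕ) :
    Ncnt (Cset A B) n + Ncnt (B \ Cset A B) n = Ncnt B n := by
  classical
  unfold Ncnt
  have hsplit : (Finset.Icc 1 n).filter (· ∈ B)
      = ((Finset.Icc 1 n).filter (· ∈ Cset A B)) ∪ ((Finset.Icc 1 n).filter (· ∈ B \ Cset A B)) := by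
    ext x
    simp only [Finset.mem_filter, Finset.mem_union, Set.mem_diff]
    constructor
    · intro ⟨hx, hxB⟩
      by_cases hC : x ∈ Cset A B
      · exact Or.inl ⟨hx, hC⟩
      · exact Or.inr ⟨hx, hxB, hC⟩
    · rintro (⟨hx, hC⟩ | ⟨hx, hxB, _⟩)
      · exact ⟨hx, Cset_subset A B hC⟩
      · exact ⟨hx, hxB⟩
  have hdis : Disjoint ((Finset.Icc 1 n).filter (· ∈ Cset A B))
      ((Finset.Icc 1 n).filter (· ∈ B \ Cset A B)) := by
    rw [Finset.disjoint_left]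
    intro x hx hy
    simp only [Finset.mem_filter, Set.mem_diff] at hx hy
    exact hy.2.2 hx.2
  rw [hsplit, Finset.card_union_of_disjoint hdis]
  congr 1
  exact Finset.card_bij (fun a _ => a) (fun a ha => by simpa using ha)
    (fun _ _ _ _ h => h) (fun b hb => ⟨b, by simpa using hb, rfl⟩)

/-- The running max of a sequence with `f n / n → L > 0` also satisfies `M n / n → L`. -/
lemma Mx_tendsto (A B : Set ℕ) (L : ℝ) (hL : 0 < L)
    (hf : Tendsto (fun n => ((fc A B n : ℤ) : ℝ) / n) atTop (nhds L)) :
    Tendsto (fun n => ((Mx A B n : ℤ) : ℝ) / n) atTop (nhds L) := by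
  rw [Metric.tendsto_atTop] at hf ⊢
  intro ε hε
  obtain ⟨N₁, hN₁⟩ := hf (ε/2) (by linarith)
  set N₁' := max N₁ 1 with hN₁'def
  set K : ℤ := Mx A B N₁' with hKdef
  have hK0 : (0:ℤ) ≤ K := le_trans (le_of_eq (fc_zero A B).symm) (fc_le_Mx A B (Nat.zero_le _))
  set N₂ : ℕ := Nat.ceil ((K:ℝ)/L) + 1 with hN₂def
  refine ⟨max N₁' N₂, fun n hn => ?_⟩
  have hnN₁' : N₁' ≤ n := le_trans (le_max_left _ _) hn
  have hnN₁ : N₁ ≤ n := le_trans (le_max_left _ _) hnN₁'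
  have hn1 : 1 ≤ n := le_trans (le_max_right _ _) hnN₁'
  have hnN₂ : N₂ ≤ n := le_trans (le_max_right _ _) hn
  have hnR : (0:ℝ) < n := by exact_mod_cast hn1
  -- lower bound
  have hfn := hN₁ n hnN₁
  rw [Real.dist_eq, abs_lt] at hfn
  have hMf : ((fc A B n : ℤ) : ℝ) ≤ ((Mx A B n : ℤ) : ℝ) := by
    exact_mod_cast fc_le_Mx A B le_rfl
  have hlow : L - ε < ((Mx A B n : ℤ) : ℝ) / n := by
    have h1 : ((fc A B n : ℤ) : ℝ) / n ≤ ((Mx A B n : ℤ) : ℝ) / n := by gcongr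
    linarith [hfn.1]
  -- upper bound
  have hup : ((Mx A B n : ℤ) : ℝ) ≤ (L + ε/2) * n := by
    obtain ⟨m, hm, hMeq⟩ : ∃ m ∈ Finset.range (n+1), Mx A B n = fc A B m :=
      Finset.exists_mem_eq_sup' (Finset.nonempty_range_add_one) (fc A B)
    have hmn : m ≤ n := by simpa [Nat.lt_succ_iff] using hm
    rw [hMeq]
    by_cases hmN : m ≤ N₁'
    · -- f m ≤ K ≤ L * N₂ ≤ (L + ε/2) * n
      have h1 : fc A B m ≤ K := fc_le_Mx A B hmN
      have h2 : (K:ℝ) ≤ N₂ * L := by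
        have : (K:ℝ)/L ≤ (N₂:ℝ) := le_trans (Nat.le_ceil _) (by exact_mod_cast Nat.le_succ _)
        exact (div_le_iff₀ hL).mp this
      have h3 : (N₂:ℝ) * L ≤ (L + ε/2) * n := by
        have : (N₂:ℝ) ≤ n := by exact_mod_cast hnN₂
        nlinarith
      calc ((fc A B m : ℤ) : ℝ) ≤ (K:ℝ) := by exact_mod_cast h1
        _ ≤ _ := le_trans h2 h3
    · push_neg at hmN
      have hm1 : 1 ≤ m := le_trans (le_max_right _ _) hmN.le
      have hmN₁ : N₁ ≤ m := le_trans (le_max_left _ _) hmN.le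
      have hmR : (0:ℝ) < m := by exact_mod_cast hm1
      have hfm := hN₁ m hmN₁
      rw [Real.dist_eq, abs_lt] at hfm
      have h1 : ((fc A B m : ℤ) : ℝ) < (L + ε/2) * m := by
        have h := hfm.2
        have h' : ((fc A B m : ℤ):ℝ)/m < L + ε/2 := by linarith
        exact (div_lt_iff₀ hmR).mp h'
      have h2 : (L + ε/2) * m ≤ (L + ε/2) * n := by
        have : (m:ℝ) ≤ n := by exact_mod_cast hmn
        nlinarith
      linarith
  rw [Real.dist_eq, abs_lt]
  constructor
  · linarith
  · have : ((Mx A B n : ℤ) : ℝ) / n ≤ L + ε/2 := (div_le_iff₀ hnR).mpr hup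
    linarith

theorem stmt_9 (A B : Set ℕ) (hdisj : Disjoint A B) (L : ℝ) (hL : 0 < L)
    (hlim : Filter.Tendsto (fun n => (cnt B n - cnt A n) / n) Filter.atTop (nhds L)) :
    ∃ D ⊆ B, Filter.Tendsto (fun n => (cnt D n - cnt A n) / n) Filter.atTop (nhds 0) ∧
      ∃ x : ℝ, HasDens (B \ D) x := by
  -- rewrite hlim in terms of fc
  have hfc : ∀ n : ℕ, cnt B n - cnt A n = ((fc A B n : ℤ) : ℝ) := by
    intro n
    rw [cnt_eq_Ncnt, cnt_eq_Ncnt]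
    push_cast [fc]
    ring
  have hflim : Tendsto (fun n => ((fc A B n : ℤ) : ℝ) / n) atTop (nhds L) := by
    simpa only [hfc] using hlim
  have hMlim := Mx_tendsto A B L hL hflim
  have hCeq : ∀ n : ℕ, cnt (Cset A B) n = ((Mx A B n : ℤ) : ℝ) := by
    intro n
    rw [cnt_eq_Ncnt, ← Ncnt_Cset A B hdisj n]
    push_cast
    ring
  have hDeq : ∀ n : ℕ, cnt (B \ Cset A B) n - cnt A n
      = ((fc A B n : ℤ) : ℝ) - ((Mx A B n : ℤ) : ℝ) := by
    intro n
    have hpart := Ncnt_partition A B n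
    have hC := Ncnt_Cset A B hdisj n
    rw [cnt_eq_Ncnt, cnt_eq_Ncnt]
    have h1 : (Ncnt (B \ Cset A B) n : ℤ) = (Ncnt B n : ℤ) - Mx A B n := by
      rw [← hC]; push_cast; omega
    have h2 : ((Ncnt (B \ Cset A B) n : ℤ) : ℝ) = ((Ncnt B n : ℤ) : ℝ) - ((Mx A B n : ℤ) : ℝ) := by
      rw [h1]; push_cast; ring
    push_cast at h2 ⊢
    simp only [fc]
    push_cast
    linarith
  refine ⟨B \ Cset A B, Set.diff_subset, ?_, L, ?_⟩
  · have : (fun n : ℕ => (cnt (B \ Cset A B) n - cnt A n) / n)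
        = fun n : ℕ => ((fc A B n : ℤ) : ℝ) / n - ((Mx A B n : ℤ) : ℝ) / n := by
      funext n
      rw [hDeq, sub_div]
    rw [this]
    simpa using hflim.sub hMlim
  · have hBC : B \ (B \ Cset A B) = Cset A B := Set.diff_diff_cancel_left (Cset_subset A B)
    rw [hBC]
    unfold HasDens
    simp only [hCeq]
    exact hMlim
end

section
/- If A, B ⊆ ℕ both have asymptotic density and d(A) < d(B), then there exists D with asymptotic density such that A ⊆ D ⊆ A ∪ B and d(D) = d(B). -/
open Filter

/-!
Build `D ⊇ A` greedily: a point of `B \ A` is put into `D` exactly when `D` has so far fewer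
elements than `B`. Then `cnt D n ≥ cnt B n - 1` always. While `D` is ahead of `B` it only grows
along `A`, so its lead over `B` at time `n` is at most `1 + g m - g n`, where `m ≤ n` is the last
time it was not ahead and `g = cnt B - cnt A`. Since `g n / n → d(B) - d(A) ≥ 0`, such backward
increments `g m - g n` are `o(n)`, hence `d(D) = d(B)`.
-/

open Topology

@[simp]
lemma cnt_zero (A : Set ℕ) : cnt A 0 = 0 := by
  simp [cnt]

lemma cnt_succ (A : Set ℕ) (n : ℕ) :
    cnt A (n + 1) = cnt A n + A.indicator (fun _ => (1 : ℝ)) (n + 1) :=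
  Finset.sum_Icc_succ_top (Nat.le_add_left 1 n) _

lemma cnt_succ_of_mem {A : Set ℕ} {n : ℕ} (h : n + 1 ∈ A) : cnt A (n + 1) = cnt A n + 1 := by
  rw [cnt_succ, Set.indicator_of_mem h]

lemma cnt_succ_of_notMem {A : Set ℕ} {n : ℕ} (h : n + 1 ∉ A) : cnt A (n + 1) = cnt A n := by
  rw [cnt_succ, Set.indicator_of_notMem h, add_zero]

lemma cnt_le_cnt_succ (A : Set ℕ) (n : ℕ) : cnt A n ≤ cnt A (n + 1) := by
  by_cases h : n + 1 ∈ A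
  · rw [cnt_succ_of_mem h]; linarith
  · rw [cnt_succ_of_notMem h]

lemma cnt_succ_le (A : Set ℕ) (n : ℕ) : cnt A (n + 1) ≤ cnt A n + 1 := by
  by_cases h : n + 1 ∈ A
  · rw [cnt_succ_of_mem h]
  · rw [cnt_succ_of_notMem h]; linarith

lemma cnt_succ_sub_eq_of_mem_iff {A D : Set ℕ} {n : ℕ} (h : n + 1 ∈ D ↔ n + 1 ∈ A) :
    cnt D (n + 1) - cnt D n = cnt A (n + 1) - cnt A n := by
  by_cases hA : n + 1 ∈ A
  · rw [cnt_succ_of_mem hA, cnt_succ_of_mem (h.2 hA)]; ring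
  · rw [cnt_succ_of_notMem hA, cnt_succ_of_notMem (mt h.1 hA)]; ring

lemma eventually_sub_le_mul_of_tendsto_div {u : ℕ → ℝ} {c : ℝ} (hc : 0 ≤ c)
    (hu : Tendsto (fun n => u n / n) atTop (𝓝 c)) {ε : ℝ} (hε : 0 < ε) :
    ∀ᶠ n : ℕ in atTop, ∀ m ≤ n, u m - u n ≤ ε * n := by
  set δ := ε / 3
  have hδ : 0 < δ := by positivity
  obtain ⟨N, hN⟩ := eventually_atTop.1 <|
    (hu.eventually (Ioo_mem_nhds (sub_lt_self c hδ) (lt_add_of_pos_right c hδ))).and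
      (eventually_gt_atTop 0)
  have hbounds : ∀ n ≥ N, (c - δ) * n ≤ u n ∧ u n ≤ (c + δ) * n := by
    intro n hn
    obtain ⟨⟨hlo, hhi⟩, hpos⟩ := hN n hn
    have hn0 : (0 : ℝ) < n := by exact_mod_cast hpos
    exact ⟨((lt_div_iff₀ hn0).1 hlo).le, ((div_lt_iff₀ hn0).1 hhi).le⟩
  set K := ∑ m ∈ Finset.range N, |u m|
  filter_upwards [eventually_ge_atTop N, eventually_ge_atTop ⌈K / δ⌉₊] with n hnN hnK m hmn
  have hK : K ≤ δ * n := by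
    have : K / δ ≤ n := (Nat.le_ceil _).trans (by exact_mod_cast hnK)
    rw [div_le_iff₀ hδ] at this
    linarith
  have hK0 : 0 ≤ K := Finset.sum_nonneg fun i _ => abs_nonneg (u i)
  have hcδn : 0 ≤ (c + δ) * n := by positivity
  have hum : u m ≤ K + (c + δ) * n := by
    rcases lt_or_ge m N with hmN | hmN
    · have : |u m| ≤ K :=
        Finset.single_le_sum (fun i _ => abs_nonneg (u i)) (Finset.mem_range.2 hmN)
      linarith [le_abs_self (u m)]
    · have : (c + δ) * m ≤ (c + δ) * n := by gcongr
      linarith [(hbounds m hmN).2]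
  have hun := (hbounds n hnN).1
  have : ε * n = 3 * δ * n := by ring
  linarith

open Classical in
noncomputable def greedyCount (A B : Set ℕ) : ℕ → ℝ
  | 0 => 0
  | n + 1 => greedyCount A B n +
      if n + 1 ∈ A ∨ (n + 1 ∈ B ∧ greedyCount A B n < cnt B n) then 1 else 0

def greedySet (A B : Set ℕ) : Set ℕ :=
  {k | k ∈ A ∨ (k ∈ B ∧ greedyCount A B (k - 1) < cnt B (k - 1))}

section greedySet

variable {A B : Set ℕ}

lemma subset_greedySet : A ⊆ greedySet A B := fun _ hk => Or.inl hk

lemma greedySet_subset_union : greedySet A B ⊆ A ∪ B := by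
  rintro k (hA | ⟨hB, -⟩)
  exacts [Or.inl hA, Or.inr hB]

lemma cnt_greedySet (n : ℕ) : cnt (greedySet A B) n = greedyCount A B n := by
  induction n with
  | zero => simp [greedyCount]
  | succ n ih =>
    classical
    rw [cnt_succ, ih, greedyCount, Set.indicator_apply]
    exact congrArg _ (if_congr Iff.rfl rfl rfl)

lemma succ_mem_greedySet_iff (n : ℕ) : n + 1 ∈ greedySet A B ↔
    n + 1 ∈ A ∨ (n + 1 ∈ B ∧ cnt (greedySet A B) n < cnt B n) := by
  rw [cnt_greedySet]
  rfl

lemma cnt_sub_one_le_cnt_greedySet (n : ℕ) : cnt B n - 1 ≤ cnt (greedySet A B) n := by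
  induction n with
  | zero => simp
  | succ n ih =>
    have hmono := cnt_le_cnt_succ (greedySet A B) n
    by_cases hB : n + 1 ∈ B
    · rw [cnt_succ_of_mem hB]
      by_cases hlt : cnt (greedySet A B) n < cnt B n
      · rw [cnt_succ_of_mem ((succ_mem_greedySet_iff n).2 (Or.inr ⟨hB, hlt⟩))]
        linarith
      · linarith
    · rw [cnt_succ_of_notMem hB]
      linarith

lemma exists_cnt_greedySet_sub_le (n : ℕ) : ∃ m ≤ n, cnt (greedySet A B) n - cnt B n ≤
    1 + (cnt B m - cnt A m) - (cnt B n - cnt A n) := by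
  induction n with
  | zero => exact ⟨0, le_rfl, by simp⟩
  | succ n ih =>
    by_cases hahead : cnt B n < cnt (greedySet A B) n
    · obtain ⟨m, hmn, hm⟩ := ih
      have hstep := cnt_succ_sub_eq_of_mem_iff (n := n) (D := greedySet A B) (A := A) <| by
        rw [succ_mem_greedySet_iff]
        exact or_iff_left fun h => (lt_asymm hahead h.2).elim
      exact ⟨m, hmn.trans n.le_succ, by linarith⟩
    · refine ⟨n + 1, le_rfl, ?_⟩
      linarith [cnt_succ_le (greedySet A B) n, cnt_le_cnt_succ B n]

theorem hasDens_greedySet {a b : ℝ} (hA : HasDens A a) (hB : HasDens B b) (hab : a ≤ b) :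
    HasDens (greedySet A B) b := by
  have hgap : Tendsto (fun n : ℕ => (cnt B n - cnt A n) / n) atTop (𝓝 (b - a)) := by
    simpa only [sub_div] using hB.sub hA
  have herr : Tendsto (fun n : ℕ => (cnt (greedySet A B) n - cnt B n) / n) atTop (𝓝 0) := by
    refine tendsto_order.2 ⟨fun x hx => ?_, fun x hx => ?_⟩
    · filter_upwards [tendsto_natCast_atTop_atTop.eventually_gt_atTop (1 / -x)] with n hn
      have hn0 : (0 : ℝ) < n := (one_div_pos.2 (neg_pos.2 hx)).trans hn
      rw [lt_div_iff₀ hn0]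
      rw [div_lt_iff₀ (neg_pos.2 hx)] at hn
      linarith [cnt_sub_one_le_cnt_greedySet (A := A) (B := B) n]
    · filter_upwards [tendsto_natCast_atTop_atTop.eventually_gt_atTop (2 / x),
        eventually_sub_le_mul_of_tendsto_div (sub_nonneg.2 hab) hgap (half_pos hx)] with n hn hg
      have hn0 : (0 : ℝ) < n := (by positivity : (0 : ℝ) < 2 / x).trans hn
      rw [div_lt_iff₀ hn0]
      rw [div_lt_iff₀ hx] at hn
      obtain ⟨m, hmn, hm⟩ := exists_cnt_greedySet_sub_le (A := A) (B := B) n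
      linarith [hg m hmn]
  have := herr.add hB
  simp only [zero_add, ← add_div, sub_add_cancel] at this
  exact this

end greedySet

theorem stmt_10 (A B : Set ℕ) (a b : ℝ) (hA : HasDens A a) (hB : HasDens B b)
    (hab : a < b) :
    ∃ D : Set ℕ, A ⊆ D ∧ D ⊆ A ∪ B ∧ HasDens D b :=
  ⟨greedySet A B, subset_greedySet, greedySet_subset_union,
    hasDens_greedySet hA hB hab.le⟩
end

section
/- For every A ⊆ ℕ there exists B ⊆ A having asymptotic density with d(B) = d̲̲(A), where d̲̲(A) = sup{d(B) : B ⊆ A, B has asymptotic density}; i.e., the supremum in the definition of d̲̲(A) is attained. -/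
open Filter

/-- `lld A` = sup of densities of subsets of `A` having asymptotic density. -/
noncomputable def lld (A : Set ℕ) : ℝ := sSup {x : ℝ | ∃ B ⊆ A, HasDens B x}

/-- `uud A` = inf of densities of supersets of `A` having asymptotic density. -/
noncomputable def uud (A : Set ℕ) : ℝ := sInf {x : ℝ | ∃ C : Set ℕ, A ⊆ C ∧ HasDens C x}

open Topology

/-!
The densities of subsets of `A` form a closed set, so its supremum is attained. If `B k ⊆ A`
has density `x k → L`, take `B k` on the block `(N k, N (k + 1)]`, where `N k` lies beyond the
point from which the counting function of `B k` is within `1 / (k + 1)` of its density, and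
`N (k + 1) ≥ (k + 1) * N k`. For `n` in block `k + 1`, the count of the glued set from `N k` to
`n` is controlled by the estimates for `B k` and `B (k + 1)` alone, while the count up to `N k`
is at most a `1 / (k + 1)` fraction of `n`.
-/

lemma cnt_le (X : Set ℕ) (n : ℕ) : cnt X n ≤ n := by
  simpa [cnt] using Finset.sum_le_sum fun k (_ : k ∈ Finset.Icc 1 n) =>
    Set.indicator_le_self' (fun _ _ => zero_le_one) (f := fun _ => (1 : ℝ)) k

lemma abs_cnt_sub_mul_le (X : Set ℕ) (L : ℝ) (n : ℕ) :
    |cnt X n - L * n| ≤ (1 + |L|) * n := by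
  have h0 : 0 ≤ cnt X n :=
    Finset.sum_nonneg fun k _ => Set.indicator_nonneg (fun _ _ => zero_le_one) k
  calc |cnt X n - L * n| ≤ |cnt X n| + |L * n| := abs_sub _ _
    _ = cnt X n + |L| * n := by rw [abs_of_nonneg h0, abs_mul, Nat.abs_cast]
    _ ≤ (1 + |L|) * n := by linarith [cnt_le X n]

lemma cnt_sub_cnt (X : Set ℕ) {m n : ℕ} (h : m ≤ n) :
    cnt X n - cnt X m = ∑ k ∈ Finset.Ioc m n, X.indicator (fun _ => (1 : ℝ)) k := by
  have hIcc : ∀ k, Finset.Icc 1 k = Finset.Ioc 0 k := Finset.Icc_add_one_left_eq_Ioc 0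
  rw [cnt, cnt, hIcc, hIcc, ← Finset.sum_Ioc_consecutive _ m.zero_le h, add_sub_cancel_left]

lemma cnt_sub_cnt_congr {X Y : Set ℕ} {m n : ℕ} (hmn : m ≤ n)
    (h : X ∩ Set.Ioc m n = Y ∩ Set.Ioc m n) : cnt X n - cnt X m = cnt Y n - cnt Y m := by
  rw [cnt_sub_cnt X hmn, cnt_sub_cnt Y hmn]
  refine Finset.sum_congr rfl fun k hk => ?_
  have hXY : k ∈ X ↔ k ∈ Y := by simpa [Finset.mem_Ioc.mp hk] using Set.ext_iff.mp h k
  classical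
  simp only [Set.indicator_apply, hXY]

lemma hasDens_empty : HasDens ∅ 0 := by
  simp [HasDens, cnt]

lemma HasDens.le_one {X : Set ℕ} {x : ℝ} (h : HasDens X x) : x ≤ 1 :=
  le_of_tendsto' h fun n => div_le_one_of_le₀ (cnt_le X n) n.cast_nonneg

lemma HasDens.eventually_abs_cnt_sub_mul_le {X : Set ℕ} {x : ℝ} (h : HasDens X x) (L : ℝ)
    {ε : ℝ} (hε : 0 < ε) :
    ∀ᶠ n : ℕ in atTop, |cnt X n - L * n| ≤ (|x - L| + ε) * n := by
  filter_upwards [Metric.tendsto_nhds.mp h ε hε, eventually_gt_atTop 0] with n hn hpos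
  have hn0 : (n : ℝ) ≠ 0 := by positivity
  calc |cnt X n - L * n| = |cnt X n / n - L| * n := by
        rw [← Nat.abs_cast n, ← abs_mul, Nat.abs_cast, sub_mul, div_mul_cancel₀ _ hn0]
    _ ≤ (|x - L| + ε) * n := by
        gcongr
        calc |cnt X n / n - L| ≤ |cnt X n / n - x| + |x - L| := abs_sub_le _ _ _
          _ ≤ |x - L| + ε := by rw [← Real.dist_eq]; linarith

def glue (N : ℕ → ℕ) (B : ℕ → Set ℕ) : Set ℕ :=
  ⋃ k, B k ∩ Set.Ioc (N k) (N (k + 1))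

lemma glue_subset {N : ℕ → ℕ} {B : ℕ → Set ℕ} {A : Set ℕ} (h : ∀ k, B k ⊆ A) :
    glue N B ⊆ A :=
  Set.iUnion_subset fun k => Set.inter_subset_left.trans (h k)

lemma glue_inter_Ioc {N : ℕ → ℕ} (hN : Monotone N) (B : ℕ → Set ℕ) (k : ℕ) :
    glue N B ∩ Set.Ioc (N k) (N (k + 1)) = B k ∩ Set.Ioc (N k) (N (k + 1)) := by
  ext m
  simp only [glue, Set.mem_inter_iff, Set.mem_iUnion]
  constructor
  · rintro ⟨⟨j, hmB, hmj⟩, hmk⟩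
    obtain rfl : j = k := by
      by_contra hjk
      exact Set.disjoint_left.mp (hN.pairwise_disjoint_on_Ioc_succ hjk) hmj hmk
    exact ⟨hmB, hmk⟩
  · rintro ⟨hmB, hmk⟩
    exact ⟨⟨k, hmB, hmk⟩, hmk⟩

lemma cnt_glue_sub_cnt_glue {N : ℕ → ℕ} (hN : Monotone N) (B : ℕ → Set ℕ) {k m n : ℕ}
    (hm : N k ≤ m) (hmn : m ≤ n) (hn : n ≤ N (k + 1)) :
    cnt (glue N B) n - cnt (glue N B) m = cnt (B k) n - cnt (B k) m := by
  refine cnt_sub_cnt_congr hmn ?_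
  have hsub : Set.Ioc m n ⊆ Set.Ioc (N k) (N (k + 1)) := Set.Ioc_subset_Ioc hm hn
  rw [← Set.inter_eq_right.mpr hsub, ← Set.inter_assoc, ← Set.inter_assoc, glue_inter_Ioc hN]

def cutPoints (M : ℕ → ℕ) : ℕ → ℕ
  | 0 => M 0
  | k + 1 => max (M (k + 1)) ((k + 1) * cutPoints M k + 1)

lemma le_cutPoints (M : ℕ → ℕ) : ∀ k, M k ≤ cutPoints M k
  | 0 => le_rfl
  | _ + 1 => le_max_left _ _

lemma mul_cutPoints_lt (M : ℕ → ℕ) (k : ℕ) :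
    (k + 1) * cutPoints M k < cutPoints M (k + 1) :=
  Nat.lt_of_lt_of_le (Nat.lt_succ_self _) (le_max_right _ _)

lemma cutPoints_strictMono (M : ℕ → ℕ) : StrictMono (cutPoints M) :=
  strictMono_nat_of_lt_succ fun k =>
    (Nat.le_mul_of_pos_left _ k.succ_pos).trans_lt (mul_cutPoints_lt M k)

lemma StrictMono.exists_mem_Ioc {N : ℕ → ℕ} (hN : StrictMono N) {K n : ℕ} (h : N K < n) :
    ∃ k, K ≤ k ∧ n ∈ Set.Ioc (N k) (N (k + 1)) := by
  have hunbdd : ¬BddAbove (N '' Set.Ici K) := by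
    rintro ⟨b, hb⟩
    have hle := hb ⟨max K (b + 1), Set.mem_Ici.mpr (le_max_left _ _), rfl⟩
    have hge := hN.le_apply (x := max K (b + 1))
    omega
  have hcover := biUnion_Ici_Ioc_map_succ (fun i hi => hN.monotone hi) hunbdd
  rw [← Set.mem_Ioi, ← hcover] at h
  obtain ⟨k, hkn, hKk, hnk⟩ : ∃ k, N k < n ∧ K ≤ k ∧ n ≤ N (k + 1) := by simpa using h
  exact ⟨k, hKk, hkn, hnk⟩

lemma tendsto_zero_of_abs_le_on_Ioc {N : ℕ → ℕ} (hN : StrictMono N) {f δ : ℕ → ℝ}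
    (hδ : Tendsto δ atTop (𝓝 0))
    (hf : ∀ k n, n ∈ Set.Ioc (N k) (N (k + 1)) → |f n| ≤ δ k) :
    Tendsto f atTop (𝓝 0) := by
  rw [Metric.tendsto_atTop] at hδ ⊢
  intro ε hε
  obtain ⟨K, hK⟩ := hδ ε hε
  refine ⟨N K + 1, fun n hn => ?_⟩
  obtain ⟨k, hKk, hnk⟩ := hN.exists_mem_Ioc (K := K) (n := n) (by omega)
  rw [Real.dist_eq, sub_zero]
  exact (hf k n hnk).trans_lt ((le_abs_self _).trans_lt (by simpa using hK k hKk))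

lemma abs_cnt_glue_sub_mul_le {N : ℕ → ℕ} (hN : Monotone N) {B : ℕ → Set ℕ} {L : ℝ}
    {η : ℕ → ℝ} (hη : ∀ k, 0 ≤ η k)
    (hB : ∀ k, ∀ m ≥ N k, |cnt (B k) m - L * m| ≤ η k * m)
    {j n : ℕ} (hgrow : (j + 1) * N j ≤ N (j + 1)) (hn : n ∈ Set.Ioc (N (j + 1)) (N (j + 2))) :
    |cnt (glue N B) n - L * n| ≤ ((1 + |L|) / (j + 1) + 2 * η j + 2 * η (j + 1)) * n := by
  obtain ⟨hbn, hn⟩ := hn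
  have hab : N j ≤ N (j + 1) := hN j.le_succ
  have hG₁ := cnt_glue_sub_cnt_glue hN B le_rfl hab le_rfl
  have hG₂ := cnt_glue_sub_cnt_glue hN B le_rfl hbn.le hn
  have e₀ := abs_le.mp (abs_cnt_sub_mul_le (glue N B) L (N j))
  have e₁ := abs_le.mp (hB j (N j) le_rfl)
  have e₂ := abs_le.mp (hB j (N (j + 1)) hab)
  have e₃ := abs_le.mp (hB (j + 1) (N (j + 1)) le_rfl)
  have e₄ := abs_le.mp (hB (j + 1) n hbn.le)
  have hab' : (N j : ℝ) ≤ N (j + 1) := by exact_mod_cast hab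
  have hbn' : (N (j + 1) : ℝ) ≤ n := by exact_mod_cast hbn.le
  have ha : (N j : ℝ) ≤ n / (j + 1) := by
    rw [le_div_iff₀ (by positivity), mul_comm]
    exact le_trans (by exact_mod_cast hgrow) hbn'
  have f₀ : (1 + |L|) * N j ≤ (1 + |L|) / (j + 1) * n := by
    rw [div_mul_eq_mul_div, mul_div_assoc]
    exact mul_le_mul_of_nonneg_left ha (by positivity)
  have f₁ : η j * N j + η j * N (j + 1) ≤ 2 * η j * n := by
    nlinarith [hη j]
  have f₂ : η (j + 1) * N (j + 1) + η (j + 1) * n ≤ 2 * η (j + 1) * n := by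
    nlinarith [hη (j + 1)]
  -- `cnt (glue N B) n - L * n` telescopes through `N j` and `N (j + 1)` via `hG₁`, `hG₂`.
  rw [abs_le]
  constructor <;> linarith

theorem exists_hasDens_glue {B : ℕ → Set ℕ} {x : ℕ → ℝ} {L : ℝ}
    (hB : ∀ k, HasDens (B k) (x k)) (hx : Tendsto x atTop (𝓝 L)) :
    ∃ N, HasDens (glue N B) L := by
  set η : ℕ → ℝ := fun k => |x k - L| + 1 / (k + 1)
  have hη : Tendsto η atTop (𝓝 0) := by
    simpa [η] using (hx.sub_const L).abs.add tendsto_one_div_add_atTop_nhds_zero_nat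
  choose M hM using fun k => eventually_atTop.mp
    ((hB k).eventually_abs_cnt_sub_mul_le L (Nat.one_div_pos_of_nat (n := k)))
  set N := cutPoints M
  set δ : ℕ → ℝ := fun j => (1 + |L|) / (j + 1) + 2 * η j + 2 * η (j + 1)
  have hδ : Tendsto δ atTop (𝓝 0) := by
    have h := tendsto_one_div_add_atTop_nhds_zero_nat.const_mul (1 + |L|)
    simpa [δ, div_eq_mul_inv] using
      (h.add (hη.const_mul 2)).add ((hη.comp (tendsto_add_atTop_nat 1)).const_mul 2)
  have hblock : ∀ j n, n ∈ Set.Ioc (N (j + 1)) (N (j + 1 + 1)) →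
      |cnt (glue N B) n / n - L| ≤ δ j := by
    intro j n hn
    have hn₀ : (0 : ℝ) < n := by exact_mod_cast (Nat.zero_le _).trans_lt hn.1
    rw [div_sub' hn₀.ne', abs_div, Nat.abs_cast, div_le_iff₀ hn₀, mul_comm (n : ℝ) L]
    exact abs_cnt_glue_sub_mul_le (cutPoints_strictMono M).monotone (fun k => by positivity)
      (fun k m hm => hM k m ((le_cutPoints M k).trans hm)) (mul_cutPoints_lt M j).le hn
  have hN' : StrictMono fun j => N (j + 1) :=
    (cutPoints_strictMono M).comp (strictMono_id.add_const 1)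
  exact ⟨N, tendsto_sub_nhds_zero_iff.mp (tendsto_zero_of_abs_le_on_Ioc hN' hδ hblock)⟩

theorem isClosed_setOf_hasDens_subset (A : Set ℕ) :
    IsClosed {x : ℝ | ∃ B ⊆ A, HasDens B x} := by
  refine IsSeqClosed.isClosed fun x L hx hL => ?_
  choose B hBA hB using hx
  obtain ⟨N, hN⟩ := exists_hasDens_glue hB hL
  exact ⟨glue N B, glue_subset hBA, hN⟩

theorem stmt_11 (A : Set ℕ) :
    ∃ B ⊆ A, HasDens B (lld A) :=
  (isClosed_setOf_hasDens_subset A).csSup_mem ⟨0, ∅, Set.empty_subset A, hasDens_empty⟩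
    ⟨1, fun _ ⟨_, _, hB⟩ => hB.le_one⟩
end
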